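/- Let n ≥ 2 and m ∈ {1,…,n}, and set φ(k) = H_m(k)^{1/m} on the open positive cone Γ₊ ⊂ ℝ^n. Then for all h, k ∈ Γ₊ one has φ(k) ≤ Σ_{i=1}^n ∂φ/∂k_i(h)·k_i. -/

import Mathlib

/-!
Write `e_j` for the unnormalized elementary symmetric polynomials, so that `φ = (c e_m)^{1/m}`
with `c > 0`. Then `φ` is positively homogeneous of degree one, and it is superadditive on `Γ₊`:
by Marcus–Lopes the ratios `e_{j+1}/e_j` are superadditive (induction on `j`, splitting off one
variable with `e_{j+1}(x) = e_{j+1}(x̂ᵢ) + xᵢ e_j(x̂ᵢ)` and using the superadditivity of the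
parallel sum `ab/(a+b)`), `e_m` is the product of the first `m` ratios, and the geometric mean of
positive vectors is superadditive. Hence `φ(h + t k) ≥ φ(h) + t φ(k)` for `t > 0`, and letting
`t → 0⁺` gives `∂_k φ(h) ≥ φ(k)`, which is the claim since `k ↦ ∂_k φ(h)` is linear.
-/

/-- The normalized `m`-th elementary symmetric polynomial (the `m`-th mean curvature). -/
noncomputable def Hm (n m : ℕ) (k : Fin n → ℝ) : ℝ :=
  ((Nat.factorial m * Nat.factorial (n - m) : ℕ) : ℝ) / (Nat.factorial n : ℝ) *
    ∑ s ∈ Finset.powersetCard m Finset.univ, ∏ i ∈ s, k i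

/-- `φ = H_m^(1/m)`. -/
noncomputable def phi (n m : ℕ) (k : Fin n → ℝ) : ℝ := Hm n m k ^ ((1 : ℝ) / m)

open Finset

noncomputable def parallelSum (a b : ℝ) : ℝ := a * b / (a + b)

lemma parallelSum_div (a p : ℝ) {q : ℝ} (hq : q ≠ 0) :
    parallelSum a (p / q) = a * p / (p + a * q) := by
  rw [parallelSum, show a + p / q = (p + a * q) / q by field_simp; ring, div_div_eq_mul_div]
  field_simp

lemma parallelSum_le_parallelSum_right {a b b' : ℝ} (ha : 0 < a) (hb : 0 < b) (h : b ≤ b') :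
    parallelSum a b ≤ parallelSum a b' := by
  unfold parallelSum
  rw [div_le_div_iff₀ (by positivity) (by linarith)]
  nlinarith [mul_le_mul_of_nonneg_left h (mul_pos ha ha).le]

lemma parallelSum_add_le {a₁ a₂ b₁ b₂ : ℝ} (ha₁ : 0 < a₁) (ha₂ : 0 < a₂) (hb₁ : 0 < b₁)
    (hb₂ : 0 < b₂) : parallelSum a₁ b₁ + parallelSum a₂ b₂ ≤ parallelSum (a₁ + a₂) (b₁ + b₂) := by
  unfold parallelSum
  rw [div_add_div _ _ (by positivity) (by positivity),
    div_le_div_iff₀ (by positivity) (by positivity)]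
  nlinarith [sq_nonneg (a₁ * b₂ - a₂ * b₁), mul_pos ha₁ hb₂, mul_pos ha₂ hb₁,
    mul_pos (mul_pos ha₁ ha₂) (mul_pos hb₁ hb₂)]

lemma Real.prod_rpow_inv_card_add_le {ι : Type*} {s : Finset ι} (hs : s.Nonempty) {a b : ι → ℝ}
    (ha : ∀ i ∈ s, 0 < a i) (hb : ∀ i ∈ s, 0 < b i) :
    (∏ i ∈ s, a i) ^ (#s : ℝ)⁻¹ + (∏ i ∈ s, b i) ^ (#s : ℝ)⁻¹
      ≤ (∏ i ∈ s, (a i + b i)) ^ (#s : ℝ)⁻¹ := by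
  have hab : ∀ i ∈ s, 0 < a i + b i := fun i hi => add_pos (ha i hi) (hb i hi)
  have hG : 0 < (∏ i ∈ s, (a i + b i)) ^ (#s : ℝ)⁻¹ := by
    have := prod_pos hab; positivity
  have hw : ∑ _i ∈ s, (#s : ℝ)⁻¹ = 1 := by
    rw [sum_const, nsmul_eq_mul, mul_inv_cancel₀ (by exact_mod_cast hs.card_pos.ne')]
  have amgm (c : ι → ℝ) (hc : ∀ i ∈ s, 0 < c i) :
      (∏ i ∈ s, c i) ^ (#s : ℝ)⁻¹ / (∏ i ∈ s, (a i + b i)) ^ (#s : ℝ)⁻¹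
        ≤ ∑ i ∈ s, (#s : ℝ)⁻¹ * (c i / (a i + b i)) := by
    have hq : ∀ i ∈ s, 0 ≤ c i / (a i + b i) := fun i hi => (div_pos (hc i hi) (hab i hi)).le
    rw [← Real.div_rpow (prod_nonneg fun i hi => (hc i hi).le) (prod_pos hab).le,
      ← prod_div_distrib, ← Real.finsetProd_rpow s _ hq]
    exact Real.geom_mean_le_arith_mean_weighted s _ _ (fun _ _ => by positivity) hw hq
  have hsum : ∑ i ∈ s, (#s : ℝ)⁻¹ * (a i / (a i + b i))
      + ∑ i ∈ s, (#s : ℝ)⁻¹ * (b i / (a i + b i)) = 1 := by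
    rw [← sum_add_distrib, ← hw]
    exact sum_congr rfl fun i hi => by rw [← mul_add, ← add_div, div_self (hab i hi).ne', mul_one]
  rw [← div_le_one hG, add_div]
  exact (add_le_add (amgm a ha) (amgm b hb)).trans hsum.le

lemma le_fderiv_apply_of_forall_pos {E : Type*} [NormedAddCommGroup E] [NormedSpace ℝ E]
    {f : E → ℝ} {x v : E} {c : ℝ} (hf : DifferentiableAt ℝ f x)
    (h : ∀ t : ℝ, 0 < t → f x + t * c ≤ f (x + t • v)) : c ≤ fderiv ℝ f x v := by
  have hline : HasDerivAt (fun t : ℝ => x + t • v) v 0 := by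
    simpa using ((hasDerivAt_id (0 : ℝ)).smul_const v).const_add x
  have hderiv : HasDerivWithinAt (fun t : ℝ => f (x + t • v)) (fderiv ℝ f x v) (Set.Ioi 0) 0 :=
    (hf.hasFDerivAt.comp_hasDerivAt_of_eq 0 hline (by simp)).hasDerivWithinAt
  rw [hasDerivWithinAt_iff_tendsto_slope, Set.sdiff_singleton_eq_self Set.self_notMem_Ioi] at hderiv
  refine ge_of_tendsto hderiv (eventually_nhdsWithin_of_forall fun t (ht : 0 < t) => ?_)
  rw [slope_def_field, zero_smul, add_zero, sub_zero, le_div_iff₀ ht]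
  linarith [h t ht]

variable {ι R : Type*}

namespace Finset

def esymm [CommSemiring R] (s : Finset ι) (m : ℕ) (x : ι → R) : R :=
  ∑ t ∈ s.powersetCard m, ∏ i ∈ t, x i

section CommSemiring

variable [CommSemiring R] (s : Finset ι) (x : ι → R)

@[simp]
lemma esymm_zero : s.esymm 0 x = 1 := by
  simp [esymm]

lemma esymm_one : s.esymm 1 x = ∑ i ∈ s, x i := by
  simp [esymm, powersetCard_one]

lemma esymm_smul (m : ℕ) (t : R) : s.esymm m (t • x) = t ^ m * s.esymm m x := by
  rw [esymm, esymm, mul_sum]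
  refine sum_congr rfl fun u hu => ?_
  simp only [Pi.smul_apply, smul_eq_mul, prod_mul_distrib, prod_const, (mem_powersetCard.1 hu).2]

variable [DecidableEq ι]

lemma esymm_succ_eq_esymm_erase_add {i : ι} (hi : i ∈ s) (m : ℕ) :
    s.esymm (m + 1) x = (s.erase i).esymm (m + 1) x + x i * (s.erase i).esymm m x := by
  have hi' : i ∉ s.erase i := notMem_erase i s
  conv_lhs => rw [esymm, ← insert_erase hi, powersetCard_succ_insert hi']
  rw [sum_union, sum_image, esymm, esymm, mul_sum]
  · congr 1
    refine sum_congr rfl fun t ht => prod_insert fun hit => hi' ?_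
    exact (mem_powersetCard.1 ht).1 hit
  · intro a ha b hb hab
    rw [mem_coe, mem_powersetCard] at ha hb
    rw [← erase_insert (fun h => hi' (ha.1 h)), hab, erase_insert (fun h => hi' (hb.1 h))]
  · refine disjoint_left.2 fun t ht ht' => ?_
    obtain ⟨u, -, rfl⟩ := mem_image.1 ht'
    exact hi' ((mem_powersetCard.1 ht).1 (mem_insert_self i u))

lemma sum_mul_esymm_erase (m : ℕ) :
    ∑ i ∈ s, x i * (s.erase i).esymm m x = (m + 1) * s.esymm (m + 1) x := by
  have hcard (u) (hu : u ∈ s.powersetCard (m + 1)) : ((m : R) + 1) = ∑ _i ∈ u, 1 := by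
    simp [(mem_powersetCard.1 hu).2]
  calc ∑ i ∈ s, x i * (s.erase i).esymm m x
      = ∑ p ∈ s.sigma fun i => (s.erase i).powersetCard m, x p.1 * ∏ j ∈ p.2, x j := by
        simp only [esymm, mul_sum, sum_sigma]
    _ = ∑ q ∈ (s.powersetCard (m + 1)).sigma id, ∏ j ∈ q.1, x j := by
        have notMem {i t} (h : t ⊆ s.erase i) : i ∉ t := fun hi => notMem_erase i s (h hi)
        refine sum_nbij' (fun p => ⟨insert p.1 p.2, p.1⟩) (fun q => ⟨q.2, q.1.erase q.2⟩)
          ?_ ?_ ?_ ?_ ?_ <;> simp only [mem_sigma, mem_powersetCard, id]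
        · rintro ⟨i, t⟩ ⟨hi, hts, rfl⟩
          exact ⟨⟨insert_subset hi (hts.trans (erase_subset i s)),
            card_insert_of_notMem (notMem hts)⟩, mem_insert_self i t⟩
        · rintro ⟨u, i⟩ ⟨⟨hus, hu⟩, hi⟩
          exact ⟨hus hi, erase_subset_erase i hus, by simp [card_erase_of_mem hi, hu]⟩
        · rintro ⟨i, t⟩ ⟨-, hts, -⟩
          simp [erase_insert (notMem hts)]
        · rintro ⟨u, i⟩ ⟨-, hi⟩
          simp [insert_erase hi]
        · rintro ⟨i, t⟩ ⟨-, hts, -⟩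
          exact (prod_insert (notMem hts)).symm
    _ = (m + 1) * s.esymm (m + 1) x := by
        rw [sum_sigma, esymm, mul_sum]
        exact sum_congr rfl fun u hu => by simp [hcard u hu]

end CommSemiring

variable {s : Finset ι} {x y : ι → ℝ}

lemma esymm_pos {m : ℕ} (hm : m ≤ #s) (hx : ∀ i ∈ s, 0 < x i) : 0 < s.esymm m x :=
  sum_pos (fun _t ht => prod_pos fun i hi => hx i ((mem_powersetCard.1 ht).1 hi))
    (powersetCard_nonempty.2 hm)

noncomputable def esymmRatio (s : Finset ι) (j : ℕ) (x : ι → ℝ) : ℝ :=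
  s.esymm (j + 1) x / s.esymm j x

lemma esymmRatio_pos {j : ℕ} (hj : j + 1 ≤ #s) (hx : ∀ i ∈ s, 0 < x i) :
    0 < s.esymmRatio j x :=
  div_pos (esymm_pos hj hx) (esymm_pos (by omega) hx)

lemma prod_range_esymmRatio {m : ℕ} (hm : m ≤ #s) (hx : ∀ i ∈ s, 0 < x i) :
    ∏ j ∈ range m, s.esymmRatio j x = s.esymm m x := by
  induction m with
  | zero => simp
  | succ m ih =>
    rw [prod_range_succ, ih (by omega), esymmRatio, mul_div_cancel₀ _ (esymm_pos (by omega) hx).ne']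

variable [DecidableEq ι]

lemma add_two_mul_esymmRatio_succ_eq_sum_parallelSum {j : ℕ} (hj : j + 2 ≤ #s)
    (hx : ∀ i ∈ s, 0 < x i) :
    (j + 2) * s.esymmRatio (j + 1) x = ∑ i ∈ s, parallelSum (x i) ((s.erase i).esymmRatio j x) := by
  have term : ∀ i ∈ s, parallelSum (x i) ((s.erase i).esymmRatio j x)
      = x i * (s.erase i).esymm (j + 1) x / s.esymm (j + 1) x := by
    intro i hi
    have hE' : 0 < (s.erase i).esymm j x :=
      esymm_pos (by rw [card_erase_of_mem hi]; omega) fun a ha => hx a (mem_of_mem_erase ha)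
    rw [esymmRatio, parallelSum_div _ _ hE'.ne', esymm_succ_eq_esymm_erase_add s x hi]
  rw [sum_congr rfl term, ← sum_div, sum_mul_esymm_erase, esymmRatio]
  push_cast
  ring

/-- The Marcus–Lopes inequality. -/
lemma esymmRatio_add_le {j : ℕ} (hj : j + 1 ≤ #s) (hx : ∀ i ∈ s, 0 < x i)
    (hy : ∀ i ∈ s, 0 < y i) : s.esymmRatio j x + s.esymmRatio j y ≤ s.esymmRatio j (x + y) := by
  induction j generalizing s with
  | zero => simp [esymmRatio, esymm_one, sum_add_distrib]
  | succ j ih =>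
    have hxy : ∀ i ∈ s, 0 < (x + y) i := fun i hi => add_pos (hx i hi) (hy i hi)
    rw [← mul_le_mul_iff_right₀ (by positivity : (0 : ℝ) < j + 2), mul_add,
      add_two_mul_esymmRatio_succ_eq_sum_parallelSum hj hx, add_two_mul_esymmRatio_succ_eq_sum_parallelSum hj hy,
      add_two_mul_esymmRatio_succ_eq_sum_parallelSum hj hxy, ← sum_add_distrib]
    refine sum_le_sum fun i hi => ?_
    have hj' : j + 1 ≤ #(s.erase i) := by rw [card_erase_of_mem hi]; omega
    have hx' : ∀ a ∈ s.erase i, 0 < x a := fun a ha => hx a (mem_of_mem_erase ha)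
    have hy' : ∀ a ∈ s.erase i, 0 < y a := fun a ha => hy a (mem_of_mem_erase ha)
    have hrx := esymmRatio_pos hj' hx'
    have hry := esymmRatio_pos hj' hy'
    calc parallelSum (x i) ((s.erase i).esymmRatio j x)
          + parallelSum (y i) ((s.erase i).esymmRatio j y)
        ≤ parallelSum (x i + y i) ((s.erase i).esymmRatio j x + (s.erase i).esymmRatio j y) :=
          parallelSum_add_le (hx i hi) (hy i hi) hrx hry
      _ ≤ parallelSum ((x + y) i) ((s.erase i).esymmRatio j (x + y)) :=
          parallelSum_le_parallelSum_right (hxy i hi) (add_pos hrx hry) (ih hj' hx' hy')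

lemma esymm_rpow_inv_add_le {m : ℕ} (hm : 1 ≤ m) (hms : m ≤ #s) (hx : ∀ i ∈ s, 0 < x i)
    (hy : ∀ i ∈ s, 0 < y i) :
    s.esymm m x ^ (m : ℝ)⁻¹ + s.esymm m y ^ (m : ℝ)⁻¹ ≤ s.esymm m (x + y) ^ (m : ℝ)⁻¹ := by
  have hxy : ∀ i ∈ s, 0 < (x + y) i := fun i hi => add_pos (hx i hi) (hy i hi)
  have hrx : ∀ j ∈ range m, 0 < s.esymmRatio j x := fun j hj =>
    esymmRatio_pos (by rw [mem_range] at hj; omega) hx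
  have hry : ∀ j ∈ range m, 0 < s.esymmRatio j y := fun j hj =>
    esymmRatio_pos (by rw [mem_range] at hj; omega) hy
  have hgm := Real.prod_rpow_inv_card_add_le (nonempty_range_iff.2 (by omega)) hrx hry
  rw [card_range] at hgm
  rw [← prod_range_esymmRatio hms hx, ← prod_range_esymmRatio hms hy,
    ← prod_range_esymmRatio hms hxy]
  refine hgm.trans (Real.rpow_le_rpow (prod_nonneg fun j hj => (add_pos (hrx j hj) (hry j hj)).le)
    (prod_le_prod (fun j hj => (add_pos (hrx j hj) (hry j hj)).le) fun j hj => ?_) (by positivity))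
  exact esymmRatio_add_le (by rw [mem_range] at hj; omega) hx hy

end Finset

lemma Hm_eq_mul_esymm (n m : ℕ) (k : Fin n → ℝ) :
    Hm n m k = ((m.factorial * (n - m).factorial : ℕ) : ℝ) / n.factorial * univ.esymm m k :=
  rfl

lemma Hm_pos {n m : ℕ} (hmn : m ≤ n) {k : Fin n → ℝ} (hk : ∀ i, 0 < k i) : 0 < Hm n m k :=
  mul_pos (by positivity) (esymm_pos (by simpa) fun i _ => hk i)

lemma Hm_smul (n m : ℕ) (t : ℝ) (k : Fin n → ℝ) : Hm n m (t • k) = t ^ m * Hm n m k := by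
  rw [Hm_eq_mul_esymm, Hm_eq_mul_esymm, esymm_smul]
  ring

lemma differentiable_Hm (n m : ℕ) : Differentiable ℝ (Hm n m) := by
  unfold Hm
  fun_prop

lemma phi_smul {n m : ℕ} (hm : m ≠ 0) {t : ℝ} (ht : 0 ≤ t) {k : Fin n → ℝ} (hk : 0 ≤ Hm n m k) :
    phi n m (t • k) = t * phi n m k := by
  rw [phi, phi, Hm_smul, Real.mul_rpow (by positivity) hk, ← Real.rpow_natCast,
    ← Real.rpow_mul ht, mul_one_div_cancel (by exact_mod_cast hm), Real.rpow_one]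

lemma phi_add_le {n m : ℕ} (hm : 1 ≤ m) (hmn : m ≤ n) {x y : Fin n → ℝ} (hx : ∀ i, 0 < x i)
    (hy : ∀ i, 0 < y i) : phi n m x + phi n m y ≤ phi n m (x + y) := by
  have hc : (0 : ℝ) ≤ ((m.factorial * (n - m).factorial : ℕ) : ℝ) / n.factorial := by positivity
  have hcard : m ≤ #(univ : Finset (Fin n)) := by simpa
  simp only [phi, Hm_eq_mul_esymm, one_div]
  rw [Real.mul_rpow hc (esymm_pos hcard fun i _ => hx i).le,
    Real.mul_rpow hc (esymm_pos hcard fun i _ => hy i).le,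
    Real.mul_rpow hc (esymm_pos (x := x + y) hcard fun i _ => add_pos (hx i) (hy i)).le, ← mul_add]
  exact mul_le_mul_of_nonneg_left
    (esymm_rpow_inv_add_le hm hcard (fun i _ => hx i) fun i _ => hy i) (by positivity)

theorem stmt12_general (n m : ℕ) (hm1 : 1 ≤ m) (hmn : m ≤ n)
    (h k : Fin n → ℝ) (hh : ∀ i, 0 < h i) (hk : ∀ i, 0 < k i) :
    phi n m k ≤ ∑ i, fderiv ℝ (phi n m) h (Pi.single i 1) * k i := by
  have hdiff : DifferentiableAt ℝ (phi n m) h :=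
    (differentiable_Hm n m h).rpow_const (Or.inl (Hm_pos hmn hh).ne')
  have hsum : ∑ i, fderiv ℝ (phi n m) h (Pi.single i 1) * k i = fderiv ℝ (phi n m) h k := by
    conv_rhs => rw [pi_eq_sum_univ' k]
    simp [map_sum, mul_comm]
  rw [hsum]
  refine le_fderiv_apply_of_forall_pos hdiff fun t ht => ?_
  calc phi n m h + t * phi n m k = phi n m h + phi n m (t • k) := by
        rw [phi_smul (by omega) ht.le (Hm_pos hmn hk).le]
    _ ≤ phi n m (h + t • k) := phi_add_le hm1 hmn hh fun i => mul_pos ht (hk i)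

/-- Supporting-hyperplane inequality for the concave, degree-one homogeneous
function `φ = H_m^(1/m)`: for all `h, k` in the open positive cone,
`φ(k) ≤ Σ_i ∂φ/∂k_i(h)·k_i`. -/
theorem stmt12 (n m : ℕ) (hn : 2 ≤ n) (hm1 : 1 ≤ m) (hmn : m ≤ n)
    (h k : Fin n → ℝ) (hh : ∀ i, 0 < h i) (hk : ∀ i, 0 < k i) :
    phi n m k ≤ ∑ i, fderiv ℝ (phi n m) h (Pi.single i 1) * k i :=
  stmt12_general n m hm1 hmn h k hh hk
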